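/- Let Ω ⊂ ℝ³ be a bounded, open, non-empty set and p ∈ (1, ∞). Then for every c > 0 there exists a matrix field P : ℝ³ → ℂ^{3×3} with polynomial entries such that dev sym(Curl P) = 0 identically on ℝ³ while ‖sym(Curl P)‖_{L^p(Ω)} > c·‖P‖_{L^p(Ω)}. (Consequently the seminorms ‖sym Curl · ‖_{L^p(Ω)} and ‖P‖_{L^p(Ω)} + ‖dev sym Curl P‖_{L^p(Ω)} are not equivalent, i.e. W^{1,p}(sym Curl; Ω) ≠ W^{1,p}(dev sym Curl; Ω).) -/

import Mathlib

/-!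
With z = x₁ + i x₂ and a constant matrix C₀, the field Pₙ = z^(n+1) C₀ has
Curl Pₙ = -(C₀ · Anti ∇(z^(n+1))) = (n+1) z^n · (-(C₀ · Anti e)) with e = ∇z = (1, i, 0).
Since e is isotropic (eᵀe = 0), C₀ can be chosen with sym(-(C₀ · Anti e)) = 𝟙, so that
sym Curl Pₙ = (n+1) z^n 𝟙 is pure trace and dev sym Curl Pₙ = 0. Pointwise
|Pₙ| = |z| / (n+1) · |sym Curl Pₙ|, and |z| ≤ R on the bounded set Ω, so
‖Pₙ‖ ≤ R/(n+1) · ‖sym Curl Pₙ‖, where the right-hand norm is positive because z vanishes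
only on a line. Take n + 1 > c R.
-/

open Matrix MeasureTheory

noncomputable section

abbrev V3 := Fin 3 → ℝ
abbrev M3C := Matrix (Fin 3) (Fin 3) ℂ

def symC (X : M3C) : M3C := (1/2 : ℂ) • (X + Xᵀ)
def devC (X : M3C) : M3C := X - ((1/3 : ℂ) * Matrix.trace X) • (1 : M3C)
def AntiC (ξ : Fin 3 → ℂ) : M3C := !![0, -ξ 2, ξ 1; ξ 2, 0, -ξ 0; -ξ 1, ξ 0, 0]
def frobNormC (X : M3C) : ℝ := Real.sqrt (∑ i, ∑ j, ‖X i j‖^2)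

def pdC (k : Fin 3) (f : V3 → ℂ) (x : V3) : ℂ := fderiv ℝ f x (Pi.single k 1)

def CurlC (P : V3 → M3C) (x : V3) : M3C :=
  Matrix.of fun i j =>
    ![pdC 1 (fun y => P y i 2) x - pdC 2 (fun y => P y i 1) x,
      pdC 2 (fun y => P y i 0) x - pdC 0 (fun y => P y i 2) x,
      pdC 0 (fun y => P y i 1) x - pdC 1 (fun y => P y i 0) x] j

def lpC (q : ℝ) (Ω : Set V3) (Q : V3 → M3C) : ℝ := (∫ x in Ω, frobNormC (Q x) ^ q) ^ (1/q)
def lpS (q : ℝ) (Ω : Set V3) (f : V3 → ℂ) : ℝ := (∫ x in Ω, ‖f x‖ ^ q) ^ (1/q)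

open Complex

theorem curlC_smul_const {φ : V3 → ℂ} {x : V3} (hφ : DifferentiableAt ℝ φ x) (C : M3C) :
    CurlC (fun y => φ y • C) x = -(C * AntiC fun k => pdC k φ x) := by
  have hpd : ∀ a k, pdC k (fun y => φ y * a) x = a * pdC k φ x := fun a k => by
    simp [pdC, fderiv_mul_const hφ]
  ext i j
  fin_cases j <;> simp [CurlC, hpd, AntiC, Matrix.mul_apply, Fin.sum_univ_three] <;> ring

theorem pdC_pow {f : V3 → ℂ} {x : V3} (hf : DifferentiableAt ℝ f x) (m : ℕ) (k : Fin 3) :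
    pdC k (fun y => f y ^ m) x = m * f x ^ (m - 1) * pdC k f x := by
  simp [pdC, fderiv_fun_pow m hf, nsmul_eq_mul, mul_assoc]

theorem pdC_continuousLinearMap (L : V3 →L[ℝ] ℂ) (k : Fin 3) (x : V3) :
    pdC k L x = L (Pi.single k 1) := by
  simp [pdC, L.fderiv]

theorem antiC_smul (a : ℂ) (ξ : Fin 3 → ℂ) : AntiC (a • ξ) = a • AntiC ξ := by
  ext i j; fin_cases i <;> fin_cases j <;> simp [AntiC]

theorem symC_smul (a : ℂ) (X : M3C) : symC (a • X) = a • symC X := by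
  simp only [symC, Matrix.transpose_smul, smul_add, smul_comm a]

theorem devC_smul_one (a : ℂ) : devC (a • (1 : M3C)) = 0 := by
  ext i j
  fin_cases i <;> fin_cases j <;> simp [devC, Matrix.trace]

theorem frobNormC_smul (a : ℂ) (X : M3C) : frobNormC (a • X) = ‖a‖ * frobNormC X := by
  simp only [frobNormC, Matrix.smul_apply, smul_eq_mul, norm_mul, mul_pow, ← Finset.mul_sum]
  rw [Real.sqrt_mul (by positivity), Real.sqrt_sq (norm_nonneg a)]

theorem frobNormC_nonneg (X : M3C) : 0 ≤ frobNormC X := Real.sqrt_nonneg _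

theorem frobNormC_one : frobNormC 1 = √3 := by
  simp [frobNormC, Fin.sum_univ_three, Matrix.one_apply]; norm_num

section RpowIntegral

variable {α : Type*} [MeasurableSpace α] {μ : Measure α} {p : ℝ} {f g : α → ℝ}

theorem integral_rpow_rpow_inv_mono (hp : 0 ≤ p) (hf : ∀ x, 0 ≤ f x) (hfg : ∀ᵐ x ∂μ, f x ≤ g x)
    (hg : Integrable (fun x => g x ^ p) μ) :
    (∫ x, f x ^ p ∂μ) ^ (1 / p) ≤ (∫ x, g x ^ p ∂μ) ^ (1 / p) := by
  refine Real.rpow_le_rpow (integral_nonneg fun x => Real.rpow_nonneg (hf x) p) ?_ (by positivity)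
  refine integral_mono_of_nonneg (.of_forall fun x => Real.rpow_nonneg (hf x) p) hg ?_
  filter_upwards [hfg] with x hx using Real.rpow_le_rpow (hf x) hx hp

theorem integral_const_mul_rpow_rpow_inv (hp : p ≠ 0) {a : ℝ} (ha : 0 ≤ a) (hf : ∀ x, 0 ≤ f x) :
    (∫ x, (a * f x) ^ p ∂μ) ^ (1 / p) = a * (∫ x, f x ^ p ∂μ) ^ (1 / p) := by
  simp_rw [Real.mul_rpow ha (hf _), integral_const_mul]
  rw [Real.mul_rpow (by positivity) (integral_nonneg fun x => Real.rpow_nonneg (hf x) p),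
    one_div, Real.rpow_rpow_inv ha hp]

end RpowIntegral

theorem lpC_le_const_mul {p : ℝ} (hp : 0 < p) {Ω : Set V3} (hΩ : MeasurableSet Ω) {a : ℝ}
    (ha : 0 ≤ a) {P Q : V3 → M3C} (hPQ : ∀ x ∈ Ω, frobNormC (P x) ≤ a * frobNormC (Q x))
    (hQ : IntegrableOn (fun x => frobNormC (Q x) ^ p) Ω) :
    lpC p Ω P ≤ a * lpC p Ω Q := by
  calc lpC p Ω P ≤ (∫ x in Ω, (a * frobNormC (Q x)) ^ p) ^ (1 / p) :=
        integral_rpow_rpow_inv_mono hp.le (fun x => frobNormC_nonneg _)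
          (ae_restrict_of_forall_mem hΩ hPQ)
          (by simpa only [Real.mul_rpow ha (frobNormC_nonneg _)] using hQ.const_mul (a ^ p))
    _ = a * lpC p Ω Q := integral_const_mul_rpow_rpow_inv hp.ne' ha fun x => frobNormC_nonneg _

theorem lpC_pos {p : ℝ} {Ω N : Set V3} (hΩ : IsOpen Ω) (hΩne : Ω.Nonempty)
    (hN : volume N = 0) {Q : V3 → M3C} (hQ : ∀ x ∈ Ω \ N, 0 < frobNormC (Q x))
    (hQint : IntegrableOn (fun x => frobNormC (Q x) ^ p) Ω) :
    0 < lpC p Ω Q := by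
  refine Real.rpow_pos_of_pos ?_ _
  rw [setIntegral_pos_iff_support_of_nonneg_ae
    (.of_forall fun x => Real.rpow_nonneg (frobNormC_nonneg _) p) hQint]
  calc 0 < volume Ω := hΩ.measure_pos volume hΩne
    _ = volume (Ω \ N) := (measure_sdiff_null hN).symm
    _ ≤ _ := measure_mono fun x hx =>
      show x ∈ _ ∩ Ω from ⟨(Real.rpow_pos_of_pos (hQ x hx) p).ne', hx.1⟩

def complexCoord : V3 →L[ℝ] ℂ :=
  ofRealCLM.comp (ContinuousLinearMap.proj 0) + I • ofRealCLM.comp (ContinuousLinearMap.proj 1)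

theorem complexCoord_apply (x : V3) : complexCoord x = x 0 + x 1 * I := by
  simp [complexCoord, mul_comm]

def C₀ : M3C := !![0, 0, -I; 0, 0, -1; 0, 1, 0]

theorem frobNormC_C₀ : frobNormC C₀ = √3 := by
  simp [frobNormC, Fin.sum_univ_three, C₀]; norm_num

def counterexample (n : ℕ) : V3 → M3C := fun x => complexCoord x ^ (n + 1) • C₀

theorem symC_curlC_counterexample (n : ℕ) (x : V3) :
    symC (CurlC (counterexample n) x) = ((n + 1) * complexCoord x ^ n) • (1 : M3C) := by
  have hgrad : (fun k => pdC k (fun y => complexCoord y ^ (n + 1)) x) =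
      ((n + 1) * complexCoord x ^ n) • ![1, I, 0] := by
    ext k
    rw [pdC_pow complexCoord.differentiableAt, pdC_continuousLinearMap]
    fin_cases k <;> simp [complexCoord_apply]
  have hsym : symC (-(C₀ * AntiC ![1, I, 0])) = 1 := by
    ext i j
    fin_cases i <;> fin_cases j <;> simp [symC, C₀, AntiC] <;> ring_nf
  unfold counterexample
  rw [curlC_smul_const (φ := fun y => complexCoord y ^ (n + 1)) (by fun_prop), hgrad, antiC_smul,
    Matrix.mul_smul, ← smul_neg, symC_smul, hsym]

theorem frobNormC_counterexample (n : ℕ) (x : V3) :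
    frobNormC (counterexample n x) =
      ‖complexCoord x‖ / (n + 1) * frobNormC (symC (CurlC (counterexample n) x)) := by
  have hn : ‖(n + 1 : ℂ)‖ = n + 1 := by exact_mod_cast Complex.norm_natCast (n + 1)
  rw [symC_curlC_counterexample, frobNormC_smul, frobNormC_one, counterexample, frobNormC_smul,
    frobNormC_C₀, norm_mul, hn, norm_pow, norm_pow]
  field_simp
  ring

theorem complexCoord_polynomial (n : ℕ) (a : ℂ) : ∃ q : MvPolynomial (Fin 3) ℂ,
    ∀ x : V3, complexCoord x ^ n * a = MvPolynomial.eval (fun k => ((x k : ℝ) : ℂ)) q :=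
  ⟨(.X 0 + .C I * .X 1) ^ n * .C a, fun x => by simp [complexCoord_apply, mul_comm]⟩

theorem volume_ker_complexCoord : volume (LinearMap.ker complexCoord.toLinearMap : Set V3) = 0 :=
  Measure.addHaar_submodule _ _ fun h => by
    simpa [complexCoord_apply] using
      LinearMap.congr_fun (LinearMap.ker_eq_top.mp h) (Pi.single 0 1)

/-- for Ω ⊂ ℝ³ bounded open nonempty and p ∈ (1,∞), for every
c > 0 there exists a matrix field P with polynomial entries such that
dev sym Curl P ≡ 0 on ℝ³ while ‖sym Curl P‖_{L^p(Ω)} > c ‖P‖_{L^p(Ω)};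
hence W^{1,p}(sym Curl; Ω) ≠ W^{1,p}(dev sym Curl; Ω). -/
theorem stmt13 (Ω : Set V3) (hΩo : IsOpen Ω) (hΩb : Bornology.IsBounded Ω)
    (hΩne : Ω.Nonempty) (p : ℝ) (hp : 1 < p) (c : ℝ) (hc : 0 < c) :
    ∃ P : V3 → M3C,
      (∀ i j, ∃ q : MvPolynomial (Fin 3) ℂ,
        ∀ x, P x i j = MvPolynomial.eval (fun k => ((x k : ℝ) : ℂ)) q) ∧
      (∀ x, devC (symC (CurlC P x)) = 0) ∧
      c * lpC p Ω P < lpC p Ω (fun x => symC (CurlC P x)) := by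
  obtain ⟨R, hR⟩ := isBounded_iff_forall_norm_le.mp (complexCoord.lipschitz.isBounded_image hΩb)
  simp only [Set.forall_mem_image] at hR
  have hR0 : 0 ≤ R := (norm_nonneg _).trans (hR hΩne.some_mem)
  set n := ⌈c * R⌉₊
  have hn : c * R < n + 1 := (Nat.le_ceil _).trans_lt (lt_add_one _)
  set S := fun x => symC (CurlC (counterexample n) x)
  have hS (x : V3) : frobNormC (S x) = ‖(n + 1 : ℂ) * complexCoord x ^ n‖ * √3 := by
    simp only [S, symC_curlC_counterexample, frobNormC_smul, frobNormC_one]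
  have hSint : IntegrableOn (fun x => frobNormC (S x) ^ p) Ω := by
    have hcont : Continuous fun x => frobNormC (S x) ^ p := by
      simp only [hS]
      exact (by fun_prop : Continuous _).rpow_const fun x => Or.inr (by linarith)
    exact (hcont.locallyIntegrable.integrableOn_isCompact hΩb.isCompact_closure).mono_set
      subset_closure
  have hSpos : 0 < lpC p Ω S := by
    refine lpC_pos hΩo hΩne volume_ker_complexCoord (fun x hx => ?_) hSint
    have hz : complexCoord x ≠ 0 := hx.2
    have hn1 : (n + 1 : ℂ) ≠ 0 := by exact_mod_cast n.succ_ne_zero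
    rw [hS]
    exact mul_pos (norm_pos_iff.2 (mul_ne_zero hn1 (pow_ne_zero _ hz))) (by positivity)
  have hPS : lpC p Ω (counterexample n) ≤ R / (n + 1) * lpC p Ω S := by
    refine lpC_le_const_mul (by linarith) hΩo.measurableSet (by positivity) (fun x hx => ?_) hSint
    rw [frobNormC_counterexample]
    exact mul_le_mul_of_nonneg_right (by gcongr; exact hR hx) (frobNormC_nonneg _)
  refine ⟨counterexample n, fun i j => complexCoord_polynomial (n + 1) (C₀ i j), fun x => ?_, ?_⟩
  · rw [symC_curlC_counterexample]
    exact devC_smul_one _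
  calc c * lpC p Ω (counterexample n) ≤ c * R / (n + 1) * lpC p Ω S := by
        rw [mul_div_assoc, mul_assoc]; gcongr
    _ < lpC p Ω S := mul_lt_of_lt_one_left hSpos ((div_lt_one (by positivity)).mpr hn)
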